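/- Let A be a Banach algebra with a left approximate identity and φ a non-zero multiplicative linear functional on A. If A is left φ-biflat, then A is left φ-amenable. -/

import Mathlib

/-!
We realize the bidual `(B ⊗_p B)**` of the projective tensor product of a Banach algebra `B`
with itself canonically as the dual of the Banach space `B →L[ℂ] B* ` of bounded bilinear
forms on `B` (the latter being isometrically isomorphic to `(B ⊗_p B)*`).  All the canonical
Banach `B`-bimodule actions are spelled out explicitly through this identification.
The multiplication of the Banach algebra `B` is encoded as a bounded bilinear map
`μ : B →L[ℂ] B →L[ℂ] B` (for a Banach algebra `A`, `μ = ContinuousLinearMap.mul ℂ A`).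
-/

noncomputable section

open ContinuousLinearMap NormedSpace

/-- The space of bounded bilinear forms on `B`, canonically the dual of the projective
tensor product `B ⊗_p B`. -/
abbrev BilForm (B : Type*) [NormedAddCommGroup B] [NormedSpace ℂ B] : Type _ :=
  B →L[ℂ] StrongDual ℂ B

/-- The bidual of the projective tensor product `B ⊗_p B`, realized canonically as the dual of
the Banach space of bounded bilinear forms on `B`. -/
abbrev TensorBidual (B : Type*) [NormedAddCommGroup B] [NormedSpace ℂ B] : Type _ :=
  StrongDual ℂ (BilForm B)

/-- The bidual `B**` of a normed space `B`. -/
abbrev Bidual (B : Type*) [NormedAddCommGroup B] [NormedSpace ℂ B] : Type _ :=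
  StrongDual ℂ (StrongDual ℂ B)

variable {B : Type*} [NormedAddCommGroup B] [NormedSpace ℂ B]

/-- The left action of `a ∈ B` (with multiplication `μ`) on `(B ⊗_p B)**`:
`(a • T) β = T ((x, y) ↦ β (a x, y))`, the canonical bidual extension of the
`B`-bimodule action `a • (x ⊗ y) = (a x) ⊗ y` on `B ⊗_p B`. -/
def tensorLSmul (μ : B →L[ℂ] B →L[ℂ] B) (a : B) (T : TensorBidual B) : TensorBidual B :=
  T.comp ((compL ℂ B B (StrongDual ℂ B)).flip (μ a))

/-- The right action of `a ∈ B` on `(B ⊗_p B)**`: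
`(T • a) β = T ((x, y) ↦ β (x, y a))`, the canonical bidual extension of the
`B`-bimodule action `(x ⊗ y) • a = x ⊗ (y a)` on `B ⊗_p B`. -/
def tensorRSmul (μ : B →L[ℂ] B →L[ℂ] B) (T : TensorBidual B) (a : B) : TensorBidual B :=
  T.comp (compL ℂ B (StrongDual ℂ B) (StrongDual ℂ B) ((compL ℂ B B ℂ).flip (μ.flip a)))

/-- `π_B^* ψ`, the image of a functional `ψ ∈ B*` under the adjoint of the product
morphism `π_B : B ⊗_p B → B`; as a bilinear form it is `(x, y) ↦ ψ (x y)`.  Thus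
`π_B** T ψ = T (piDual μ ψ)` for `T ∈ (B ⊗_p B)**`. -/
def piDual (μ : B →L[ℂ] B →L[ℂ] B) (ψ : StrongDual ℂ B) : BilForm B :=
  (compL ℂ B B ℂ ψ).comp μ

/-- The left action of `a ∈ B` on the bidual `B**`: `(a • m) f = m (f ∘ (a * ·))`. -/
def bidualLSmul (μ : B →L[ℂ] B →L[ℂ] B) (a : B) (m : Bidual B) : Bidual B :=
  m.comp ((compL ℂ B B ℂ).flip (μ a))

/-- A Banach algebra `B` (with multiplication `μ` and a multiplicative functional `ψ`) is
*left `ψ`-biflat* if there is a bounded linear map `ρ : B → (B ⊗_p B)**` with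
`ρ (a b) = ψ (b) ρ (a) = a • ρ (b)` for all `a, b ∈ B`, and `ψ̃ ∘ π_B** ∘ ρ = ψ`
(note `(ψ̃ ∘ π_B**) T = T (piDual μ ψ)`). -/
instance instTopologicalSpaceTensorBidual : TopologicalSpace (TensorBidual B) :=
  @ContinuousLinearMap.topologicalSpace ℂ ℂ _ _ (RingHom.id ℂ) (BilForm B) ℂ _ _ _ _ _ _ _

def IsLeftBiflat (μ : B →L[ℂ] B →L[ℂ] B) (ψ : StrongDual ℂ B) : Prop :=
  ∃ ρ : B →L[ℂ] TensorBidual B,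
    (∀ a b : B, ρ (μ a b) = ψ b • ρ a ∧ ρ (μ a b) = tensorLSmul μ a (ρ b)) ∧
    ∀ a : B, ρ a (piDual μ ψ) = ψ a

/-- A Banach algebra `B` is *left `ψ`-amenable* if there is `m ∈ B**` with
`a • m = ψ (a) m` for all `a ∈ B` and `ψ̃ (m) = m (ψ) = 1`. -/
def IsLeftAmenable (μ : B →L[ℂ] B →L[ℂ] B) (ψ : StrongDual ℂ B) : Prop :=
  ∃ m : Bidual B, (∀ (a : B) (f : StrongDual ℂ B), m (f.comp (μ a)) = ψ a * m f) ∧ m ψ = 1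

open Filter Topology

section LeftApproximateIdentity

variable {X E : Type*} [TopologicalSpace X] [TopologicalSpace E] [T2Space E]
  [MulAction ℂ E] [ContinuousConstSMul ℂ E]

/-- Letting `e` run along the left approximate identity in `ρ (e b) = ψ b • ρ e` shows that
`ρ e → ρ a₀` (take `b = a₀`), and then `ρ b = ψ b • ρ a₀` for every `b`. -/
theorem eq_smul_of_map_mul_eq_smul {μ : X → X → X} {ψ : X → ℂ} {ρ : X → E}
    (hρ : Continuous ρ) (hρ_mul : ∀ a b, ρ (μ a b) = ψ b • ρ a) {l : Filter X} [l.NeBot]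
    (hl : ∀ a, Tendsto (fun e => μ e a) l (𝓝 a)) {a₀ : X} (ha₀ : ψ a₀ = 1) (b : X) :
    ρ b = ψ b • ρ a₀ := by
  have hlim : Tendsto ρ l (𝓝 (ρ a₀)) := by
    simpa only [Function.comp_def, hρ_mul, ha₀, one_smul] using (hρ.tendsto a₀).comp (hl a₀)
  refine tendsto_nhds_unique ((hρ.tendsto b).comp (hl b)) ?_
  simpa only [Function.comp_def, hρ_mul] using hlim.const_smul (ψ b)

end LeftApproximateIdentity

/-- The instance `instTopologicalSpaceTensorBidual` hides the normed structure of the dual from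
instance search, but is definitionally its norm topology. -/
instance : T2Space (TensorBidual B) :=
  letI : NormedAddCommGroup (BilForm B) := inferInstance
  letI : NormedSpace ℂ (BilForm B) := inferInstance
  inferInstanceAs (T2Space (StrongDual ℂ (BilForm B)))

instance : ContinuousConstSMul ℂ (TensorBidual B) :=
  letI : NormedAddCommGroup (BilForm B) := inferInstance
  letI : NormedSpace ℂ (BilForm B) := inferInstance
  inferInstanceAs (ContinuousConstSMul ℂ (StrongDual ℂ (BilForm B)))

variable {μ : B →L[ℂ] B →L[ℂ] B} {ψ : StrongDual ℂ B}

def piDualL (μ : B →L[ℂ] B →L[ℂ] B) : StrongDual ℂ B →L[ℂ] BilForm B :=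
  ((compL ℂ B (B →L[ℂ] B) (StrongDual ℂ B)).flip μ).comp (compL ℂ B B ℂ)

theorem piDual_comp_mul (hμ : ∀ x y z, μ (μ x y) z = μ x (μ y z)) (a : B) (f : StrongDual ℂ B) :
    piDual μ (f.comp (μ a)) = (compL ℂ B B (StrongDual ℂ B)).flip (μ a) (piDual μ f) := by
  ext x y
  simp [piDual, hμ]

/-- The mean is `π** T = T ∘ piDualL μ`; associativity turns `a • π** T` into `π** (a • T)`. -/
theorem isLeftAmenable_of_tensorLSmul_eq_smul (hμ : ∀ x y z, μ (μ x y) z = μ x (μ y z))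
    {T : TensorBidual B} (hT : ∀ a, tensorLSmul μ a T = ψ a • T) (hTψ : T (piDual μ ψ) = 1) :
    IsLeftAmenable μ ψ := by
  refine ⟨T.comp (piDualL μ), fun a f => ?_, hTψ⟩
  calc T (piDual μ (f.comp (μ a))) = tensorLSmul μ a T (piDual μ f) := by
        rw [piDual_comp_mul hμ]; rfl
    _ = ψ a * T (piDual μ f) := by rw [hT]; rfl

theorem IsLeftBiflat.isLeftAmenable (hμ : ∀ x y z, μ (μ x y) z = μ x (μ y z))
    (hbf : IsLeftBiflat μ ψ) {l : Filter B} [l.NeBot]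
    (hl : ∀ a, Tendsto (fun e => μ e a) l (𝓝 a)) {a₀ : B} (ha₀ : ψ a₀ = 1) :
    IsLeftAmenable μ ψ := by
  obtain ⟨ρ, hρ_mul, hρ_π⟩ := hbf
  have hρ : ∀ b, ρ b = ψ b • ρ a₀ :=
    eq_smul_of_map_mul_eq_smul ρ.continuous (fun a b => (hρ_mul a b).1) hl ha₀
  refine isLeftAmenable_of_tensorLSmul_eq_smul hμ (fun a => ?_) (by rw [hρ_π, ha₀])
  rw [← (hρ_mul a a₀).2, (hρ_mul a a₀).1, ha₀, one_smul, hρ]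

variable {A : Type*} [NonUnitalNormedRing A] [NormedSpace ℂ A]
  [IsScalarTower ℂ A A] [SMulCommClass ℂ A A] [CompleteSpace A]

theorem left_phi_amenable_of_left_phi_biflat_of_lai_general
    (φ : A →L[ℂ] ℂ) (hφ_ne : φ ≠ 0)
    (hlai : ∃ l : Filter A, l.NeBot ∧ ∀ a : A, Filter.Tendsto (fun e => e * a) l (nhds a))
    (hbf : IsLeftBiflat (ContinuousLinearMap.mul ℂ A) φ) :
    IsLeftAmenable (ContinuousLinearMap.mul ℂ A) φ := by
  obtain ⟨l, hl_ne, hl⟩ := hlai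
  obtain ⟨x, hx⟩ := φ.exists_ne_zero hφ_ne
  have ha₀ : φ ((φ x)⁻¹ • x) = 1 := by rw [map_smul, smul_eq_mul, inv_mul_cancel₀ hx]
  exact hbf.isLeftAmenable mul_assoc hl ha₀

/-- if a Banach algebra `A` has a left approximate identity (a net `(e_α)`
with `e_α a → a` in norm for every `a ∈ A`, encoded by a filter) and `A` is left
`φ`-biflat, then `A` is left `φ`-amenable. -/
theorem left_phi_amenable_of_left_phi_biflat_of_lai
    (φ : A →L[ℂ] ℂ) (hφ_ne : φ ≠ 0)
    (hφ_mul : ∀ a b : A, φ (a * b) = φ a * φ b)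
    (hlai : ∃ l : Filter A, l.NeBot ∧ ∀ a : A, Filter.Tendsto (fun e => e * a) l (nhds a))
    (hbf : IsLeftBiflat (ContinuousLinearMap.mul ℂ A) φ) :
    IsLeftAmenable (ContinuousLinearMap.mul ℂ A) φ :=
  left_phi_amenable_of_left_phi_biflat_of_lai_general φ hφ_ne hlai hbf
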